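/- Let I be a nondegenerate interval in ℝ, μ a σ-finite Borel measure on I, and k a nonnegative kernel on I. Suppose c₀ := sup_{s∈I} ∫_{{t∈I | t≥s}} k(t,s)^p μ(dt) < ∞ and ε₀ := lim_{δ↓0} sup_{r,t∈I, r≤t≤r+δ} ∫_{[r,t]} k(s,r)^p μ(ds) < ∞ for some p > 0. Then for every ε > ε₀ there is δ > 0 such that for all m, n ∈ ℕ: sup_{r,t∈I, r≤t≤r+mδ} ∫_{[r,t]} R_{k^p,μ,n}(s,r) μ(ds) ≤ (n c_ε)^{m-1} ε^n, with c_ε := max{1, c₀/ε}. -/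

import Mathlib

open MeasureTheory ENNReal Set

/-- The iterated kernels of a nonnegative kernel `k` relative to a measure `μ`:
`R_{k,μ,1} = k` and `R_{k,μ,n+1}(t,s) = ∫_{[s,t]} k(t,u) R_{k,μ,n}(u,s) μ(du)`
(the value at `n = 0` is junk). -/
noncomputable def iterK (μ : Measure ℝ) (k : ℝ → ℝ → ℝ≥0∞) : ℕ → ℝ → ℝ → ℝ≥0∞
  | 0 => fun _ _ => 0
  | 1 => k
  | (n + 2) => fun t s => ∫⁻ u in Icc s t, k t u * iterK μ k (n + 1) u s ∂μ

/-!
By Fubini, `∫_{[r,t]} R_{n+1}(s,r) μ(ds) = ∫_{[r,t]} R_n(u,r) (∫_{[u,t]} k(s,u)^p μ(ds)) μ(du)`.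
For `δ` chosen with the windowed supremum below `ε`, the inner integral is at most `ε` when
`t ≤ u + δ`, and at most `c₀ ≤ c_ε ε` otherwise, which only happens for `u < t - δ`, on a
window one `δ` shorter. Writing `J_n(m)` for the supremum over windows of length `m δ`, this
gives `J_{n+1}(m) ≤ ε J_n(m) + c_ε ε J_n(m - 1)`, the second term being absent for `m = 1`,
and induction on `n` yields
`J_n(m) ≤ (n c_ε)^(m-1) ε^n`.
-/

open Function

@[simp]
theorem iterK_one (μ : Measure ℝ) (K : ℝ → ℝ → ℝ≥0∞) : iterK μ K 1 = K := rfl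

section

variable {μ : Measure ℝ} [SFinite μ]

theorem measurable_setLIntegral_Icc {f : ℝ × ℝ → ℝ → ℝ≥0∞} (hf : Measurable (uncurry f)) :
    Measurable fun q : ℝ × ℝ => ∫⁻ u in Icc q.2 q.1, f q u ∂μ := by
  have h : Measurable fun x : (ℝ × ℝ) × ℝ => (Icc x.1.2 x.1.1).indicator (f x.1) x.2 :=
    Measurable.ite ((measurableSet_le measurable_fst.snd measurable_snd).inter
      (measurableSet_le measurable_snd measurable_fst.fst)) hf measurable_const
  simpa only [lintegral_indicator measurableSet_Icc] using h.lintegral_prod_right'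

theorem measurable_iterK {K : ℝ → ℝ → ℝ≥0∞} (hK : Measurable (uncurry K)) :
    ∀ n, Measurable (uncurry (iterK μ K n))
  | 0 => measurable_const
  | 1 => hK
  | n + 2 => measurable_setLIntegral_Icc <|
      (hK.comp (measurable_fst.fst.prodMk measurable_snd)).mul
        ((measurable_iterK hK (n + 1)).comp (measurable_snd.prodMk measurable_fst.snd))

theorem lintegral_Icc_lintegral_Icc_swap {f : ℝ → ℝ → ℝ≥0∞} (hf : Measurable (uncurry f))
    (r t : ℝ) :
    ∫⁻ s in Icc r t, ∫⁻ u in Icc r s, f s u ∂μ ∂μ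
      = ∫⁻ u in Icc r t, ∫⁻ s in Icc u t, f s u ∂μ ∂μ := by
  have hlow : EqOn (fun s => ∫⁻ u in Icc r s, f s u ∂μ)
      (fun s => ∫⁻ u in Icc r t, (Iic s).indicator (f s) u ∂μ) (Icc r t) := fun s hs => by
    simp only
    have hset : Iic s ∩ Icc r t = Icc r s := by
      ext x; simp only [mem_inter_iff, mem_Iic, mem_Icc] at hs ⊢; grind
    rw [lintegral_indicator measurableSet_Iic, Measure.restrict_restrict measurableSet_Iic, hset]
  have hupp : EqOn (fun u => ∫⁻ s in Icc u t, f s u ∂μ)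
      (fun u => ∫⁻ s in Icc r t, (Ici u).indicator (f · u) s ∂μ) (Icc r t) := fun u hu => by
    simp only
    have hset : Ici u ∩ Icc r t = Icc u t := by
      ext x; simp only [mem_inter_iff, mem_Ici, mem_Icc] at hu ⊢; grind
    rw [lintegral_indicator measurableSet_Ici, Measure.restrict_restrict measurableSet_Ici, hset]
  rw [setLIntegral_congr_fun measurableSet_Icc hlow, setLIntegral_congr_fun measurableSet_Icc hupp]
  simp only [indicator_apply, mem_Iic, mem_Ici]
  exact lintegral_lintegral_swap <| Measurable.aemeasurable <|
    Measurable.ite (measurableSet_le measurable_snd measurable_fst) hf measurable_const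

theorem measurable_iterK_left {K : ℝ → ℝ → ℝ≥0∞} (hK : Measurable (uncurry K)) (n : ℕ)
    (r : ℝ) : Measurable fun u => iterK μ K n u r :=
  (measurable_iterK hK n).comp (measurable_id.prodMk measurable_const)

theorem lintegral_Icc_iterK_add_two {K : ℝ → ℝ → ℝ≥0∞} (hK : Measurable (uncurry K))
    (n : ℕ) (r t : ℝ) :
    ∫⁻ s in Icc r t, iterK μ K (n + 2) s r ∂μ
      = ∫⁻ u in Icc r t, iterK μ K (n + 1) u r * ∫⁻ s in Icc u t, K s u ∂μ ∂μ := by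
  refine (lintegral_Icc_lintegral_Icc_swap (f := fun s u => K s u * iterK μ K (n + 1) u r)
    (hK.mul ((measurable_iterK_left hK (n + 1) r).comp measurable_snd)) r t).trans
    (lintegral_congr fun u => ?_)
  have hKu : Measurable fun s => K s u := hK.comp (measurable_id.prodMk measurable_const)
  rw [lintegral_mul_const _ hKu, mul_comm]

end

section Estimates

variable {μ : Measure ℝ} {K : ℝ → ℝ → ℝ≥0∞} {I : Set ℝ} {δ : ℝ} {ε C : ℝ≥0∞}

theorem lintegral_Icc_le_of_local_global (hI : I.OrdConnected)
    (hloc : ∀ r ∈ I, ∀ w ∈ I, r ≤ w → w ≤ r + δ → ∫⁻ s in Icc r w, K s r ∂μ ≤ ε)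
    (hglob : ∀ u ∈ I, ∫⁻ s in {s | s ∈ I ∧ u ≤ s}, K s u ∂μ ≤ C) {u w : ℝ} (hu : u ∈ I)
    (hw : w ∈ I) (huw : u ≤ w) :
    ∫⁻ s in Icc u w, K s u ∂μ ≤ ε + (Iio (w - δ)).indicator (fun _ => C) u := by
  by_cases hnear : w ≤ u + δ
  · rw [indicator_of_notMem (by simp only [mem_Iio, not_lt]; linarith)]
    simpa using hloc u hu w hw huw hnear
  · rw [indicator_of_mem (by simp only [mem_Iio]; linarith)]
    refine le_add_left ((lintegral_mono_set fun s hs => ?_).trans (hglob u hu))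
    exact ⟨hI.out hu hw hs, hs.1⟩

theorem lintegral_Icc_iterK_add_two_le [SFinite μ] (hK : Measurable (uncurry K))
    (hI : I.OrdConnected)
    (hloc : ∀ r ∈ I, ∀ w ∈ I, r ≤ w → w ≤ r + δ → ∫⁻ s in Icc r w, K s r ∂μ ≤ ε)
    (hglob : ∀ u ∈ I, ∫⁻ s in {s | s ∈ I ∧ u ≤ s}, K s u ∂μ ≤ C) (n : ℕ) {r w : ℝ}
    (hr : r ∈ I) (hw : w ∈ I) :
    ∫⁻ s in Icc r w, iterK μ K (n + 2) s r ∂μ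
      ≤ (∫⁻ s in Icc r w, iterK μ K (n + 1) s r ∂μ) * ε
        + (∫⁻ s in Ico r (w - δ), iterK μ K (n + 1) s r ∂μ) * C := by
  set R := fun u => iterK μ K (n + 1) u r
  have hR : Measurable R := measurable_iterK_left hK (n + 1) r
  have hpoint : ∀ u ∈ Icc r w, R u * ∫⁻ s in Icc u w, K s u ∂μ
      ≤ R u * ε + (Iio (w - δ)).indicator R u * C := fun u hu => by
    calc R u * ∫⁻ s in Icc u w, K s u ∂μ
        ≤ R u * (ε + (Iio (w - δ)).indicator (fun _ => C) u) := by
          gcongr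
          exact lintegral_Icc_le_of_local_global hI hloc hglob (hI.out hr hw hu) hw hu.2
      _ = R u * ε + (Iio (w - δ)).indicator R u * C := by
          by_cases h : u ∈ Iio (w - δ) <;> simp [h, mul_add]
  have hfar : ∫⁻ u in Icc r w, (Iio (w - δ)).indicator R u ∂μ ≤ ∫⁻ u in Ico r (w - δ), R u ∂μ := by
    rw [lintegral_indicator measurableSet_Iio, Measure.restrict_restrict measurableSet_Iio]
    exact lintegral_mono_set fun u hu => ⟨hu.2.1, hu.1⟩
  calc ∫⁻ s in Icc r w, iterK μ K (n + 2) s r ∂μ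
      ≤ ∫⁻ u in Icc r w, (R u * ε + (Iio (w - δ)).indicator R u * C) ∂μ := by
        rw [lintegral_Icc_iterK_add_two hK]
        exact setLIntegral_mono ((hR.mul_const ε).add
          ((hR.indicator measurableSet_Iio).mul_const C)) hpoint
    _ = (∫⁻ u in Icc r w, R u ∂μ) * ε + (∫⁻ u in Icc r w, (Iio (w - δ)).indicator R u ∂μ) * C := by
        rw [lintegral_add_left (hR.mul_const ε), lintegral_mul_const _ hR,
          lintegral_mul_const _ (hR.indicator measurableSet_Iio)]
    _ ≤ _ := by gcongr

theorem lintegral_Icc_iterK_le [SFinite μ] (hK : Measurable (uncurry K))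
    (hI : I.OrdConnected)
    (hloc : ∀ r ∈ I, ∀ w ∈ I, r ≤ w → w ≤ r + δ → ∫⁻ s in Icc r w, K s r ∂μ ≤ ε)
    (hglob : ∀ u ∈ I, ∫⁻ s in {s | s ∈ I ∧ u ≤ s}, K s u ∂μ ≤ C) (hδ : 0 ≤ δ) {c : ℝ≥0∞}
    (hc : 1 ≤ c) (hC : C ≤ c * ε) (n m : ℕ) {r w : ℝ} (hr : r ∈ I) (hw : w ∈ I) (hrw : r ≤ w)
    (hwr : w ≤ r + (m + 1) * δ) :
    ∫⁻ s in Icc r w, iterK μ K (n + 1) s r ∂μ ≤ (((n + 1 : ℕ) : ℝ≥0∞) * c) ^ m * ε ^ (n + 1) := by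
  induction n generalizing m r w with
  | zero =>
    cases m with
    | zero => simpa using hloc r hr w hw hrw (by simpa using hwr)
    | succ m =>
      calc ∫⁻ s in Icc r w, K s r ∂μ
          ≤ ∫⁻ s in {s | s ∈ I ∧ r ≤ s}, K s r ∂μ :=
            lintegral_mono_set fun s hs => ⟨hI.out hr hw hs, hs.1⟩
        _ ≤ c * ε := (hglob r hr).trans hC
        _ ≤ c ^ (m + 1) * ε := by gcongr; exact le_self_pow₀ hc (by omega)
        _ = _ := by simp
  | succ n ih =>
    have hstep := lintegral_Icc_iterK_add_two_le (μ := μ) hK hI hloc hglob n hr hw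
    cases m with
    | zero =>
      rw [Ico_eq_empty (by push_cast at hwr; linarith), Measure.restrict_empty,
        lintegral_zero_measure, zero_mul, add_zero] at hstep
      calc _ ≤ _ := hstep
        _ ≤ (((n + 1 : ℕ) : ℝ≥0∞) * c) ^ 0 * ε ^ (n + 1) * ε := by gcongr; exact ih 0 hr hw hrw hwr
        _ = _ := by ring
    | succ m =>
      have hfar : ∫⁻ s in Ico r (w - δ), iterK μ K (n + 1) s r ∂μ
          ≤ (((n + 1 : ℕ) : ℝ≥0∞) * c) ^ m * ε ^ (n + 1) := by
        by_cases h : r ≤ w - δ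
        · refine (lintegral_mono_set Ico_subset_Icc_self).trans
            (ih m hr (hI.out hr hw ⟨h, by linarith⟩) h ?_)
          push_cast at hwr; linarith
        · simp [Ico_eq_empty (by linarith : ¬ r < w - δ)]
      calc _ ≤ _ := hstep
        _ ≤ (((n + 1 : ℕ) : ℝ≥0∞) * c) ^ (m + 1) * ε ^ (n + 1) * ε
            + (((n + 1 : ℕ) : ℝ≥0∞) * c) ^ m * ε ^ (n + 1) * (c * ε) := by
          gcongr
          exact ih (m + 1) hr hw hrw hwr
        _ = (((n + 1 : ℕ) : ℝ≥0∞) * c) ^ m * (((n + 2 : ℕ) : ℝ≥0∞) * c) * ε ^ (n + 2) := by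
          push_cast; ring
        _ ≤ (((n + 2 : ℕ) : ℝ≥0∞) * c) ^ m * (((n + 2 : ℕ) : ℝ≥0∞) * c) * ε ^ (n + 2) := by
          gcongr; omega
        _ = _ := by ring

end Estimates

theorem stmt11_general (I : Set ℝ) (hI : I.OrdConnected)
    (μ : Measure ℝ) [SigmaFinite μ]
    (k : ℝ → ℝ → ℝ≥0∞) (hk : Measurable fun q : ℝ × ℝ => k q.1 q.2)
    (p : ℝ)
    (c₀ : ℝ≥0∞)
    (hc₀ : c₀ = ⨆ s ∈ I, ∫⁻ t in {t | t ∈ I ∧ s ≤ t}, k t s ^ p ∂μ)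
    (ε₀ : ℝ≥0∞)
    (hε₀ : ε₀ = ⨅ δ ∈ Ioi (0:ℝ), ⨆ r ∈ I, ⨆ t ∈ I, ⨆ _ : r ≤ t ∧ t ≤ r + δ,
        ∫⁻ s in Icc r t, k s r ^ p ∂μ)
    (ε : ℝ≥0∞) (hε : ε₀ < ε) :
    ∃ δ : ℝ, 0 < δ ∧ ∀ m n : ℕ, 1 ≤ m → 1 ≤ n →
      (⨆ r ∈ I, ⨆ t ∈ I, ⨆ _ : r ≤ t ∧ t ≤ r + (m : ℝ) * δ,
        ∫⁻ s in Icc r t, iterK μ (fun t' s' => k t' s' ^ p) n s r ∂μ)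
      ≤ ((n : ℝ≥0∞) * max 1 (c₀ / ε)) ^ (m - 1) * ε ^ n := by
  obtain ⟨δ, hδ, hδε⟩ : ∃ δ ∈ Ioi (0 : ℝ), (⨆ r ∈ I, ⨆ t ∈ I, ⨆ _ : r ≤ t ∧ t ≤ r + δ,
      ∫⁻ s in Icc r t, k s r ^ p ∂μ) < ε := by
    simpa only [hε₀, iInf_lt_iff, exists_prop] using hε
  have hloc : ∀ r ∈ I, ∀ w ∈ I, r ≤ w → w ≤ r + δ → ∫⁻ s in Icc r w, k s r ^ p ∂μ ≤ ε :=
    fun r hr w hw hrw hwr => hδε.le.trans' <|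
      le_iSup₂_of_le r hr <| le_iSup₂_of_le w hw <| le_iSup_of_le ⟨hrw, hwr⟩ le_rfl
  have hglob : ∀ u ∈ I, ∫⁻ s in {s | s ∈ I ∧ u ≤ s}, k s u ^ p ∂μ ≤ c₀ :=
    fun u hu => hc₀ ▸ le_iSup₂_of_le u hu le_rfl
  have hC : c₀ ≤ max 1 (c₀ / ε) * ε := by
    rcases eq_or_ne ε ⊤ with rfl | hεtop
    · simp
    · calc c₀ = c₀ / ε * ε := (ENNReal.div_mul_cancel (zero_le.trans_lt hε).ne' hεtop).symm
        _ ≤ max 1 (c₀ / ε) * ε := by gcongr; exact le_max_right _ _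
  refine ⟨δ, hδ, fun m n hm hn =>
    iSup₂_le fun r hr => iSup₂_le fun w hw => iSup_le fun ⟨hrw, hwr⟩ => ?_⟩
  obtain ⟨m, rfl⟩ := Nat.exists_eq_add_of_le' hm
  obtain ⟨n, rfl⟩ := Nat.exists_eq_add_of_le' hn
  simpa using lintegral_Icc_iterK_le (K := fun t' s' => k t' s' ^ p) (hk.pow_const p) hI
    hloc hglob hδ.le (le_max_left _ _) hC n m hr hw hrw (by exact_mod_cast hwr)

/-- Second type of integral estimate for the iterated kernels of `k^p`,
integrating in the first variable. -/
theorem stmt11 (I : Set ℝ) (hI : I.OrdConnected) (hne : ∃ a ∈ I, ∃ b ∈ I, a < b)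
    (μ : Measure ℝ) [SigmaFinite μ]
    (k : ℝ → ℝ → ℝ≥0∞) (hk : Measurable fun q : ℝ × ℝ => k q.1 q.2)
    (p : ℝ) (hp : 0 < p)
    (c₀ : ℝ≥0∞)
    (hc₀ : c₀ = ⨆ s ∈ I, ∫⁻ t in {t | t ∈ I ∧ s ≤ t}, k t s ^ p ∂μ)
    (hc₀fin : c₀ ≠ ∞)
    (ε₀ : ℝ≥0∞)
    (hε₀ : ε₀ = ⨅ δ ∈ Ioi (0:ℝ), ⨆ r ∈ I, ⨆ t ∈ I, ⨆ _ : r ≤ t ∧ t ≤ r + δ,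
        ∫⁻ s in Icc r t, k s r ^ p ∂μ)
    (hε₀fin : ε₀ ≠ ∞)
    (ε : ℝ≥0∞) (hε : ε₀ < ε) :
    ∃ δ : ℝ, 0 < δ ∧ ∀ m n : ℕ, 1 ≤ m → 1 ≤ n →
      (⨆ r ∈ I, ⨆ t ∈ I, ⨆ _ : r ≤ t ∧ t ≤ r + (m : ℝ) * δ,
        ∫⁻ s in Icc r t, iterK μ (fun t' s' => k t' s' ^ p) n s r ∂μ)
      ≤ ((n : ℝ≥0∞) * max 1 (c₀ / ε)) ^ (m - 1) * ε ^ n :=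
  stmt11_general I hI μ k hk p c₀ hc₀ ε₀ hε₀ ε hε
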